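/- Let β, γ, λ, μ ∈ ℝ with β ≠ 0, and let φ satisfy φ' = μ + λφ² on an open set S. Let k² = 4λγμ and define U(ε) = 6λγμ/β + (6λ²γ/β) φ(ε)². Then U satisfies −k² U + β U² − γ U'' = 0 on S. -/

import Mathlib

open Filter Topology Real

/-!
Write `ψ = μ + λφ²`, so that `U = cψ` with `c = 6λγ/β`. The Riccati equation `φ' = μ + λφ²`
gives `ψ' = 2λφψ`, and differentiating once more and eliminating `λφ² = ψ - μ` gives
`ψ'' = 6λψ² - 4λμψ`, an equation in `ψ` alone. Substituting into `-k²U + βU² - γU''`, the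
linear terms cancel because `k² = 4λγμ` and the quadratic ones because `βc = 6λγ`.
-/

theorem deriv_deriv_eq_of_hasDerivAt_of_isOpen {𝕜 F : Type*} [NontriviallyNormedField 𝕜]
    [NormedAddCommGroup F] [NormedSpace 𝕜 F] {f g : 𝕜 → F} {g' : F} {S : Set 𝕜} {x : 𝕜}
    (hS : IsOpen S) (hf : ∀ y ∈ S, HasDerivAt f (g y) y) (hx : x ∈ S) (hg : HasDerivAt g g' x) :
    deriv (deriv f) x = g' := by
  have hfg : deriv f =ᶠ[𝓝 x] g := by
    filter_upwards [hS.mem_nhds hx] with y hy using (hf y hy).deriv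
  rw [hfg.deriv_eq, hg.deriv]

section Riccati

variable {𝕜 : Type*} [NontriviallyNormedField 𝕜] {φ : 𝕜 → 𝕜} {lam mu x : 𝕜}

theorem HasDerivAt.riccati_rhs (hφ : HasDerivAt φ (mu + lam * φ x ^ 2) x) :
    HasDerivAt (fun y => mu + lam * φ y ^ 2) (2 * lam * φ x * (mu + lam * φ x ^ 2)) x := by
  refine ((hφ.fun_pow 2).const_mul lam |>.const_add mu).congr_deriv ?_
  ring

theorem HasDerivAt.riccati_rhs_deriv (hφ : HasDerivAt φ (mu + lam * φ x ^ 2) x) :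
    HasDerivAt (fun y => 2 * lam * φ y * (mu + lam * φ y ^ 2))
      (6 * lam * (mu + lam * φ x ^ 2) ^ 2 - 4 * lam * mu * (mu + lam * φ x ^ 2)) x := by
  refine ((hφ.const_mul (2 * lam)).mul hφ.riccati_rhs).congr_deriv ?_
  ring

theorem deriv_deriv_riccati_rhs {S : Set 𝕜} (hS : IsOpen S)
    (hφ : ∀ y ∈ S, HasDerivAt φ (mu + lam * φ y ^ 2) y) (hx : x ∈ S) :
    deriv (deriv fun y => mu + lam * φ y ^ 2) x
      = 6 * lam * (mu + lam * φ x ^ 2) ^ 2 - 4 * lam * mu * (mu + lam * φ x ^ 2) :=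
  deriv_deriv_eq_of_hasDerivAt_of_isOpen hS (fun y hy => (hφ y hy).riccati_rhs) hx
    (hφ x hx).riccati_rhs_deriv

end Riccati

theorem mul_div_sq_eq_mul_div {K : Type*} [Field K] (a b : K) : b * (a / b) ^ 2 = a * (a / b) := by
  rcases eq_or_ne b 0 with rfl | hb
  · simp
  · field_simp

theorem stmt_16_general (beta gamma lam mu k : ℝ) (φ U : ℝ → ℝ) (S : Set ℝ)
    (hS : IsOpen S)
    (hφ : ∀ ε ∈ S, HasDerivAt φ (mu + lam * φ ε ^ 2) ε)
    (hk : k ^ 2 = 4 * lam * gamma * mu)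
    (hU : U = fun ε => 6 * lam * gamma * mu / beta + 6 * lam ^ 2 * gamma / beta * φ ε ^ 2) :
    ∀ ε ∈ S, -(k ^ 2) * U ε + beta * U ε ^ 2 - gamma * deriv (deriv U) ε = 0 := by
  intro ε hε
  set c := 6 * lam * gamma / beta
  set ψ := fun y => mu + lam * φ y ^ 2
  have hUψ : U = fun y => c * ψ y := by
    rw [hU]
    ext y
    simp only [c, ψ]
    ring
  have hU'' : deriv (deriv U) ε = c * (6 * lam * ψ ε ^ 2 - 4 * lam * mu * ψ ε) := by
    rw [hUψ, deriv_const_mul_field', deriv_const_mul_field']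
    exact congrArg (c * ·) (deriv_deriv_riccati_rhs hS hφ hε)
  have hc : beta * c ^ 2 = 6 * lam * gamma * c := mul_div_sq_eq_mul_div _ _
  rw [hU'', hUψ, hk]
  linear_combination ψ ε ^ 2 * hc

/-- Set 1 solution of the reduced coupled Boussinesq ODE −k²U + βU² − γU'' = 0. -/
theorem stmt_16 (beta gamma lam mu k : ℝ) (hbeta : beta ≠ 0) (φ U : ℝ → ℝ) (S : Set ℝ)
    (hS : IsOpen S)
    (hφ : ∀ ε ∈ S, HasDerivAt φ (mu + lam * φ ε ^ 2) ε)
    (hk : k ^ 2 = 4 * lam * gamma * mu)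
    (hU : U = fun ε => 6 * lam * gamma * mu / beta + 6 * lam ^ 2 * gamma / beta * φ ε ^ 2) :
    ∀ ε ∈ S, -(k ^ 2) * U ε + beta * U ε ^ 2 - gamma * deriv (deriv U) ε = 0 :=
  stmt_16_general beta gamma lam mu k φ U S hS hφ hk hU
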